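/- arXiv:1901.09089 — 2 statements merged into one kernel-verified Lean document; each statement's English description precedes it below -/
import Mathlib

section
/- Frame Theorem (propositional version): Let truth and support of formulas be determined by an assignment of mutable atom values. If two models M and M' agree on the values of all atoms whose associated location lies in a set X, and φ is a formula whose support (computed in M) is contained in X, then φ has the same truth value in M and M', and the support of φ is the same in M and M'. -/
/-- Propositional frame-logic formulas whose atoms are indexed by locations. -/
inductive Fm (L : Type) where
  | atom : L → Fm L
  | conj : Fm L → Fm L → Fm L
  | neg  : Fm L → Fm L
  | ite  : Fm L → Fm L → Fm L → Fm L

namespace Fm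

variable {L : Type}

/-- Truth of a formula in a model `M : L → Bool`. -/
def eval (M : L → Bool) : Fm L → Bool
  | .atom ℓ => M ℓ
  | .conj φ ψ => φ.eval M && ψ.eval M
  | .neg φ => !(φ.eval M)
  | .ite γ φ ψ => if γ.eval M then φ.eval M else ψ.eval M

/-- Support of a formula in a model `M`: `Sp(atom ℓ) = {ℓ}`,
`Sp(α∧β)=Sp(α)∪Sp(β)`, `Sp(¬α)=Sp(α)`, and
`Sp(ite(γ:α,β)) = Sp(γ) ∪ (Sp(α) if γ is true in `M`, else Sp(β))`. -/
def sp (M : L → Bool) : Fm L → Set L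
  | .atom ℓ => {ℓ}
  | .conj φ ψ => φ.sp M ∪ ψ.sp M
  | .neg φ => φ.sp M
  | .ite γ φ ψ => γ.sp M ∪ if γ.eval M then φ.sp M else ψ.sp M

end Fm

/-- Frame Theorem (propositional version): if `M'` is a mutation of `M`
stable on `X` (they agree on all locations in `X`) and the support of `φ`
computed in `M` is contained in `X`, then `φ` has the same truth value and the
same support in `M` and `M'`. -/
theorem frame_theorem {L : Type} (M M' : L → Bool) (X : Set L)
    (hstable : ∀ ℓ ∈ X, M ℓ = M' ℓ) (φ : Fm L) (hsp : φ.sp M ⊆ X) :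
    φ.eval M = φ.eval M' ∧ φ.sp M = φ.sp M' := by
  induction φ with
  | atom ℓ =>
    refine ⟨?_, rfl⟩
    exact hstable ℓ (hsp (by simp [Fm.sp]))
  | conj α β ihα ihβ =>
    have hα := ihα (fun x hx => hsp (Or.inl hx))
    have hβ := ihβ (fun x hx => hsp (Or.inr hx))
    exact ⟨by simp [Fm.eval, hα.1, hβ.1], by simp [Fm.sp, hα.2, hβ.2]⟩
  | neg α ihα =>
    have hα := ihα hsp
    exact ⟨by simp [Fm.eval, hα.1], hα.2⟩
  | ite γ α β ihγ ihα ihβ =>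
    have hspγ : γ.sp M ⊆ X := fun x hx => hsp (Or.inl hx)
    have hγ := ihγ hspγ
    by_cases h : γ.eval M = true
    · have hspα : α.sp M ⊆ X := fun x hx => hsp (by simp [Fm.sp, h]; exact Or.inr hx)
      have hα := ihα hspα
      have h' : γ.eval M' = true := hγ.1 ▸ h
      constructor
      · simp [Fm.eval, h, h', hα.1]
      · simp [Fm.sp, h, h', hγ.2, hα.2]
    · have h0 : γ.eval M = false := by simpa using h
      have hspβ : β.sp M ⊆ X := fun x hx => hsp (by simp [Fm.sp, h0]; exact Or.inr hx)
      have hβ := ihβ hspβ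
      have h' : γ.eval M' = false := hγ.1 ▸ h0
      constructor
      · simp [Fm.eval, h0, h', hβ.1]
      · simp [Fm.sp, h0, h', hγ.2, hβ.2]
end

section
/- Soundness of the frame rule for propositional frame logic Hoare triples: Suppose {α} S {β} is a valid triple in the sense that for every model M with M ⊨ α, executing S on M (a deterministic transformer on models only modifying atom values at locations in a set Mod(S) disjoint from Sp(μ)) yields M' with M' ⊨ β. If Sp(α) ∩ Sp(μ) = ∅ in every model and S modifies only locations in Sp(α)-reachable locations (disjoint from Sp(μ)), then {α ∧ μ} S {β ∧ μ} is valid. -/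

theorem Fm.eval_frame {L : Type} (M M' : L → Bool) :
    ∀ φ : Fm L, (∀ ℓ ∈ φ.sp M, M' ℓ = M ℓ) → φ.eval M' = φ.eval M := by
  intro φ
  induction φ with
  | atom ℓ => intro h; exact h ℓ (by simp [Fm.sp])
  | conj φ ψ ihφ ihψ =>
      intro h
      simp only [Fm.eval, Fm.sp] at *
      rw [ihφ (fun ℓ hℓ => h ℓ (Or.inl hℓ)), ihψ (fun ℓ hℓ => h ℓ (Or.inr hℓ))]
  | neg φ ih =>
      intro h
      simp only [Fm.eval, Fm.sp] at *
      rw [ih h]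
  | ite γ φ ψ ihγ ihφ ihψ =>
      intro h
      simp only [Fm.eval, Fm.sp] at *
      have hγ := ihγ (fun ℓ hℓ => h ℓ (Or.inl hℓ))
      rw [hγ]
      by_cases hc : γ.eval M = true
      · simp only [hc, if_true] at h ⊢
        exact ihφ (fun ℓ hℓ => h ℓ (Or.inr hℓ))
      · simp only [hc, if_false] at h ⊢
        exact ihψ (fun ℓ hℓ => h ℓ (Or.inr hℓ))

/-- Soundness of the frame rule: a program `S` is abstractly a transformer
`step` on models only modifying atom values at locations in `Mod`.  If
`{α} S {β}` is valid, the supports of `α` and `μ` are disjoint in every model,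
and `Mod` is disjoint from the support of `μ` whenever `α ∧ μ` holds, then
`{α ∧ μ} S {β ∧ μ}` is valid. -/
theorem frame_rule_sound {L : Type}
    (step : (L → Bool) → (L → Bool)) (Mod : Set L)
    (hstep : ∀ (M : L → Bool) (ℓ : L), ℓ ∉ Mod → step M ℓ = M ℓ)
    (α β μ : Fm L)
    (hvalid : ∀ M : L → Bool, α.eval M = true → β.eval (step M) = true)
    (hdisj : ∀ M : L → Bool, α.sp M ∩ μ.sp M = ∅)
    (hmod : ∀ M : L → Bool, (Fm.conj α μ).eval M = true → Mod ∩ μ.sp M = ∅) :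
    ∀ M : L → Bool, (Fm.conj α μ).eval M = true →
      (Fm.conj β μ).eval (step M) = true := by

  intro M hM
  simp only [Fm.eval, Bool.and_eq_true] at hM ⊢
  obtain ⟨hα, hμ⟩ := hM
  have hmod' := hmod M (by simp [Fm.eval, hα, hμ])
  have hagree : ∀ ℓ ∈ μ.sp M, step M ℓ = M ℓ := by
    intro ℓ hℓ
    apply hstep
    intro hℓM
    exact Set.eq_empty_iff_forall_notMem.mp hmod' ℓ ⟨hℓM, hℓ⟩
  exact ⟨hvalid M hα, (Fm.eval_frame M (step M) μ hagree).trans hμ⟩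
end
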